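/- Gorbunov–Pinsker nonanticipatory ε-entropy equals the nonanticipative information RDF: for every n and D, the infimum of (1/(n+1)) I(X^n;Y^n) over conditional distributions in the fidelity set satisfying the Markov chains X_{i+1}^n ↔ X^i ↔ Y^i (i = 0,...,n-1) equals the infimum of (1/(n+1)) I(X^n → Y^n) (directed information) over causally factorized conditional distributions in the fidelity set: R^ε_{0,n}(D) = R^{na}_{0,n}(D). -/

import Mathlib

open scoped BigOperators

/-- Probability of an event under a (finitely supported) distribution given as a pmf vector. -/
noncomputable def Pr {Ω : Type} [Fintype Ω] (μ : Ω → ℝ) (E : Ω → Prop) : ℝ :=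
  ∑ z, Set.indicator {w | E w} μ z

/-- `MC μ f g h` : the Markov chain `f ↔ g ↔ h` under `μ`. -/
def MC {Ω A B C : Type} [Fintype Ω] (μ : Ω → ℝ) (f : Ω → A) (g : Ω → B) (h : Ω → C) : Prop :=
  ∀ (a : A) (b : B) (c : C),
    Pr μ (fun z => f z = a ∧ g z = b ∧ h z = c) * Pr μ (fun z => g z = b) =
      Pr μ (fun z => f z = a ∧ g z = b) * Pr μ (fun z => g z = b ∧ h z = c)

/-- Mutual information `I(X;Y)` of the two components of a joint pmf on a product. -/
noncomputable def MI {Xa Ya : Type} [Fintype Xa] [Fintype Ya] (μ : Xa × Ya → ℝ) : ℝ :=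
  ∑ z, μ z * Real.log (μ z / ((∑ y, μ (z.1, y)) * (∑ x, μ (x, z.2))))

/-- Conditional mutual information `I(f;g|h)` under the joint law `μ`. -/
noncomputable def CMI {Ω A B C : Type} [Fintype Ω]
    (μ : Ω → ℝ) (f : Ω → A) (g : Ω → B) (h : Ω → C) : ℝ :=
  ∑ z, μ z * Real.log
    (Pr μ (fun w => f w = f z ∧ g w = g z ∧ h w = h z) * Pr μ (fun w => h w = h z) /
      (Pr μ (fun w => f w = f z ∧ h w = h z) * Pr μ (fun w => g w = g z ∧ h w = h z)))

/-- Directed information `I(X^n → Y^n) = ∑_{i=0}^n I(X^i; Y_i | Y^{i-1})`. -/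
noncomputable def DI {n : ℕ} {Ω XT YT : Type} [Fintype Ω]
    (μ : Ω → ℝ) (xc : Ω → Fin (n+1) → XT) (yc : Ω → Fin (n+1) → YT) : ℝ :=
  ∑ i : Fin (n+1),
    CMI μ (fun w => (fun j : {j : Fin (n+1) // (j : ℕ) ≤ (i : ℕ)} => xc w j.1))
      (fun w => yc w i)
      (fun w => (fun j : {j : Fin (n+1) // (j : ℕ) < (i : ℕ)} => yc w j.1))

/-- A conditional distribution (kernel) `K` is nonanticipative (causally factorized):
`K(y^n|x^n) = ∏_{i=0}^n q_i(y_i | y^{i-1}, x^i)`. -/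
def NA {n : ℕ} {Xa Ya : Type} [Fintype Xa] [Fintype Ya]
    (K : (Fin (n+1) → Xa) → (Fin (n+1) → Ya) → ℝ) : Prop :=
  ∃ q : Fin (n+1) → (Fin (n+1) → Xa) → (Fin (n+1) → Ya) → Ya → ℝ,
    (∀ i x y b, 0 ≤ q i x y b) ∧ (∀ i x y, ∑ b, q i x y b = 1) ∧
    (∀ (i : Fin (n+1)) x x' y y', (∀ j : Fin (n+1), (j : ℕ) ≤ (i : ℕ) → x j = x' j) →
      (∀ j : Fin (n+1), (j : ℕ) < (i : ℕ) → y j = y' j) → q i x y = q i x' y') ∧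
    (∀ x y, K x y = ∏ i, q i x y (y i))

lemma Pr_eq {Ω : Type} [Fintype Ω] (μ : Ω → ℝ) (E : Ω → Prop) [DecidablePred E] :
    Pr μ E = ∑ z, if E z then μ z else 0 := by
  unfold Pr
  refine Finset.sum_congr rfl fun z _ => ?_
  classical
  rw [Set.indicator_apply]
  exact if_congr Iff.rfl rfl rfl

lemma Pr_congr {Ω : Type} [Fintype Ω] (μ : Ω → ℝ) {E F : Ω → Prop}
    (h : ∀ z, E z ↔ F z) : Pr μ E = Pr μ F := by
  classical
  rw [Pr_eq, Pr_eq]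
  exact Finset.sum_congr rfl fun z _ => by rw [if_congr (h z) rfl rfl]

lemma Pr_nonneg {Ω : Type} [Fintype Ω] {μ : Ω → ℝ} (hμ : ∀ z, 0 ≤ μ z)
    (E : Ω → Prop) : 0 ≤ Pr μ E := by
  classical
  rw [Pr_eq]
  exact Finset.sum_nonneg fun z _ => by split <;> simp [hμ z]

lemma le_Pr {Ω : Type} [Fintype Ω] {μ : Ω → ℝ} (hμ : ∀ z, 0 ≤ μ z)
    {E : Ω → Prop} {z : Ω} (hz : E z) : μ z ≤ Pr μ E := by
  classical
  rw [Pr_eq]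
  have := Finset.single_le_sum (f := fun w => if E w then μ w else 0)
    (fun w _ => by split <;> simp [hμ w]) (Finset.mem_univ z)
  simpa [hz] using this

lemma Pr_pos {Ω : Type} [Fintype Ω] {μ : Ω → ℝ} (hμ : ∀ z, 0 ≤ μ z)
    {E : Ω → Prop} {z : Ω} (hz : E z) (hpos : 0 < μ z) : 0 < Pr μ E :=
  lt_of_lt_of_le hpos (le_Pr hμ hz)

lemma Pr_mono {Ω : Type} [Fintype Ω] {μ : Ω → ℝ} (hμ : ∀ z, 0 ≤ μ z)
    {E F : Ω → Prop} (h : ∀ z, E z → F z) : Pr μ E ≤ Pr μ F := by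
  classical
  rw [Pr_eq, Pr_eq]
  refine Finset.sum_le_sum fun z _ => ?_
  by_cases hz : E z
  · simp [hz, h z hz]
  · simp only [hz, if_false]; split <;> simp [hμ z]

lemma Pr_fiber {Ω β : Type} [Fintype Ω] [Fintype β] (μ : Ω → ℝ) (E : Ω → Prop)
    (t : Ω → β) : Pr μ E = ∑ b, Pr μ (fun w => E w ∧ t w = b) := by
  classical
  simp only [Pr_eq]
  rw [Finset.sum_comm]
  refine Finset.sum_congr rfl fun z _ => ?_
  by_cases hz : E z
  · simp [hz]
  · simp [hz]

lemma prod_div_telescope (f : ℕ → ℝ) (m : ℕ) (hf : ∀ k, k ≤ m → f k ≠ 0) :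
    ∏ i ∈ Finset.range m, (f (i+1) / f i) = f m / f 0 := by
  induction m with
  | zero => simp [div_self (hf 0 le_rfl)]
  | succ m ih =>
    rw [Finset.prod_range_succ, ih (fun k hk => hf k (hk.trans (Nat.le_succ m)))]
    have h1 : f m ≠ 0 := hf m (Nat.le_succ m)
    rw [div_mul_div_comm, mul_comm (f m), mul_comm (f 0), ← div_div,
      mul_div_assoc, div_self h1, mul_one]


open Classical in
lemma sum_prefix {Ya : Type} [Fintype Ya] (m : ℕ)
    (q : Fin m → (Fin m → Ya) → Ya → ℝ)
    (hq1 : ∀ i y, ∑ b, q i y b = 1)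
    (hqc : ∀ (i : Fin m) (y y' : Fin m → Ya),
      (∀ j : Fin m, (j:ℕ) < (i:ℕ) → y j = y' j) → q i y = q i y') :
    ∀ d k, k + d = m → ∀ y : Fin m → Ya,
      (∑ y' : Fin m → Ya, if (∀ j : Fin m, (j:ℕ) < k → y' j = y j)
          then ∏ i, q i y' (y' i) else 0)
        = ∏ i ∈ Finset.univ.filter (fun i : Fin m => (i:ℕ) < k), q i y (y i) := by
  classical
  intro d
  induction d with
  | zero =>
    intro k hk y
    have hk' : k = m := by omega
    have h1 : ∀ y' : Fin m → Ya, (∀ j : Fin m, (j:ℕ) < k → y' j = y j) ↔ y' = y := by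
      intro y'
      constructor
      · intro h; funext j; exact h j (by have := j.isLt; omega)
      · rintro rfl j _; rfl
    rw [Finset.sum_congr rfl (fun y' _ => if_congr (h1 y') rfl rfl),
      Finset.sum_ite_eq' Finset.univ y (fun y' => ∏ i, q i y' (y' i))]
    have h2 : Finset.univ.filter (fun i : Fin m => (i:ℕ) < k) = Finset.univ :=
      Finset.filter_true_of_mem fun i _ => by have := i.isLt; omega
    simp [h2]
  | succ d ih =>
    intro k hk y
    have hkm : k < m := by omega
    set kf : Fin m := ⟨k, hkm⟩ with hkf
    have hiff : ∀ (b : Ya) (y' : Fin m → Ya),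
        (∀ j : Fin m, (j:ℕ) < k + 1 → y' j = Function.update y kf b j) ↔
        ((∀ j : Fin m, (j:ℕ) < k → y' j = y j) ∧ y' kf = b) := by
      intro b y'
      constructor
      · intro h
        refine ⟨fun j hj => ?_, ?_⟩
        · rw [h j (by omega), Function.update_of_ne (fun hc => by
            have := congrArg Fin.val hc; simp [hkf] at this; omega)]
        · rw [h kf (by simp [hkf]), Function.update_self]
      · rintro ⟨h1, h2⟩ j hj
        rcases Nat.lt_or_ge (j:ℕ) k with hc | hc
        · rw [h1 j hc, Function.update_of_ne (fun hcon => by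
            have := congrArg Fin.val hcon; simp [hkf] at this; omega)]
        · have hj' : j = kf := Fin.ext (by simp [hkf]; omega)
          rw [hj', Function.update_self]; exact hj' ▸ h2
    have hsplit : (∑ y' : Fin m → Ya, if (∀ j : Fin m, (j:ℕ) < k → y' j = y j)
          then ∏ i, q i y' (y' i) else 0)
        = ∑ b : Ya, ∑ y' : Fin m → Ya,
            if (∀ j : Fin m, (j:ℕ) < k + 1 → y' j = Function.update y kf b j)
            then ∏ i, q i y' (y' i) else 0 := by
      rw [Finset.sum_comm]
      refine Finset.sum_congr rfl fun y' _ => ?_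
      rw [Finset.sum_congr rfl (fun b _ => if_congr (hiff b y') rfl rfl)]
      by_cases hc : ∀ j : Fin m, (j:ℕ) < k → y' j = y j
      · rw [if_pos hc, Finset.sum_congr rfl (fun b _ => if_congr (and_iff_right hc) rfl rfl),
          Finset.sum_ite_eq Finset.univ (y' kf) (fun _ => ∏ i, q i y' (y' i))]
        simp
      · rw [if_neg hc]
        exact (Finset.sum_eq_zero fun b _ => if_neg fun hcon => hc hcon.1).symm
    rw [hsplit]
    have hins : Finset.univ.filter (fun i : Fin m => (i:ℕ) < k + 1)
        = insert kf (Finset.univ.filter (fun i : Fin m => (i:ℕ) < k)) := by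
      ext i
      simp only [Finset.mem_filter, Finset.mem_univ, true_and, Finset.mem_insert, Fin.ext_iff,
        hkf]
      omega
    have hnot : kf ∉ Finset.univ.filter (fun i : Fin m => (i:ℕ) < k) := by
      simp [hkf]
    have hterm : ∀ b : Ya,
        (∑ y' : Fin m → Ya, if (∀ j : Fin m, (j:ℕ) < k + 1 → y' j = Function.update y kf b j)
            then ∏ i, q i y' (y' i) else 0)
        = q kf y b * ∏ i ∈ Finset.univ.filter (fun i : Fin m => (i:ℕ) < k), q i y (y i) := by
      intro b
      rw [ih (k+1) (by omega) (Function.update y kf b), hins,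
        Finset.prod_insert hnot, Function.update_self]
      have h1 : q kf (Function.update y kf b) = q kf y := by
        refine hqc kf _ _ fun j hj => Function.update_of_ne (fun hc => by
          have := congrArg Fin.val hc; simp [hkf] at this; omega) _ _
      rw [h1]
      congr 1
      refine Finset.prod_congr rfl fun i hi => ?_
      simp only [Finset.mem_filter] at hi
      have hik : (i:ℕ) < k := hi.2
      have hne : i ≠ kf := fun hc => by
        have := congrArg Fin.val hc; simp [hkf] at this; omega
      rw [Function.update_of_ne hne]
      have h2 : q i (Function.update y kf b) = q i y := by
        refine hqc i _ _ fun j hj => Function.update_of_ne (fun hc => by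
          have := congrArg Fin.val hc; simp [hkf] at this; omega) _ _
      rw [h2]
    rw [Finset.sum_congr rfl fun b _ => hterm b, ← Finset.sum_mul, hq1, one_mul]

section Main

variable {n : ℕ} {Xa Ya : Type} [Fintype Xa] [Fintype Ya]

/-- `Gm μ z k = Pr(Xfull = x, Y^{<k} = y)`. -/
noncomputable def Gm (μ : (Fin (n+1) → Xa) × (Fin (n+1) → Ya) → ℝ)
    (z : (Fin (n+1) → Xa) × (Fin (n+1) → Ya)) (k : ℕ) : ℝ :=
  Pr μ (fun w => (∀ j, w.1 j = z.1 j) ∧ ∀ j : Fin (n+1), (j:ℕ) < k → w.2 j = z.2 j)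

/-- `Um μ z i k = Pr(X^{≤i} = x, Y^{<k} = y)`. -/
noncomputable def Um (μ : (Fin (n+1) → Xa) × (Fin (n+1) → Ya) → ℝ)
    (z : (Fin (n+1) → Xa) × (Fin (n+1) → Ya)) (i k : ℕ) : ℝ :=
  Pr μ (fun w => (∀ j : Fin (n+1), (j:ℕ) ≤ i → w.1 j = z.1 j) ∧
    ∀ j : Fin (n+1), (j:ℕ) < k → w.2 j = z.2 j)

/-- `Hm μ z k = Pr(Y^{<k} = y)`. -/
noncomputable def Hm (μ : (Fin (n+1) → Xa) × (Fin (n+1) → Ya) → ℝ)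
    (z : (Fin (n+1) → Xa) × (Fin (n+1) → Ya)) (k : ℕ) : ℝ :=
  Pr μ (fun w => ∀ j : Fin (n+1), (j:ℕ) < k → w.2 j = z.2 j)

lemma Hm_zero (μ : (Fin (n+1) → Xa) × (Fin (n+1) → Ya) → ℝ)
    (hμ1 : ∑ z, μ z = 1) (z) : Hm μ z 0 = 1 := by
  classical
  unfold Hm
  rw [Pr_eq]
  simpa using hμ1

lemma Gm_top (μ : (Fin (n+1) → Xa) × (Fin (n+1) → Ya) → ℝ) (z) :
    Gm μ z (n+1) = μ z := by
  classical
  unfold Gm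
  rw [Pr_congr μ (F := fun w => w = z) (fun w => by
    constructor
    · rintro ⟨h1, h2⟩
      exact Prod.ext (funext h1) (funext fun j => h2 j j.isLt)
    · rintro rfl; exact ⟨fun _ => rfl, fun _ _ => rfl⟩)]
  rw [Pr_eq]
  simp

lemma Gm_zero_eq (μ : (Fin (n+1) → Xa) × (Fin (n+1) → Ya) → ℝ) (z) :
    Gm μ z 0 = ∑ y, μ (z.1, y) := by
  classical
  unfold Gm
  rw [Pr_congr μ (F := fun w => w.1 = z.1) (fun w => by
    constructor
    · rintro ⟨h1, _⟩; exact funext h1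
    · intro h; exact ⟨fun j => congrFun h j, fun j hj => absurd hj (Nat.not_lt_zero _)⟩)]
  rw [Pr_eq, Fintype.sum_prod_type]
  rw [Finset.sum_eq_single_of_mem z.1 (Finset.mem_univ _) (fun x' _ hx => by simp [hx])]
  simp

lemma Hm_top_eq (μ : (Fin (n+1) → Xa) × (Fin (n+1) → Ya) → ℝ) (z) :
    Hm μ z (n+1) = ∑ x, μ (x, z.2) := by
  classical
  unfold Hm
  rw [Pr_congr μ (F := fun w => w.2 = z.2) (fun w => by
    constructor
    · intro h; exact funext fun j => h j j.isLt
    · intro h j _; exact congrFun h j)]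
  rw [Pr_eq, Fintype.sum_prod_type]
  simp


lemma CMI_term (μ : (Fin (n+1) → Xa) × (Fin (n+1) → Ya) → ℝ) (i : Fin (n+1)) :
    CMI μ (fun w => (fun j : {j : Fin (n+1) // (j : ℕ) ≤ (i : ℕ)} => w.1 j.1))
      (fun w => w.2 i)
      (fun w => (fun j : {j : Fin (n+1) // (j : ℕ) < (i : ℕ)} => w.2 j.1))
    = ∑ z, μ z * Real.log
        (Um μ z i ((i:ℕ)+1) * Hm μ z i / (Um μ z i i * Hm μ z ((i:ℕ)+1))) := by
  classical
  unfold CMI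
  refine Finset.sum_congr rfl fun z _ => ?_
  have hlt_split : ∀ (v u : Fin (n+1) → Ya),
      (∀ j : Fin (n+1), (j:ℕ) < (i:ℕ)+1 → v j = u j) ↔
      (v i = u i ∧ ∀ j : Fin (n+1), (j:ℕ) < (i:ℕ) → v j = u j) := by
    intro v u
    constructor
    · intro h
      exact ⟨h i (Nat.lt_succ_self _), fun j hj => h j (Nat.lt_succ_of_lt hj)⟩
    · rintro ⟨h1, h2⟩ j hj
      rcases Nat.lt_or_ge (j:ℕ) (i:ℕ) with hc | hc
      · exact h2 j hc
      · have : j = i := Fin.ext (by omega)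
        rw [this]; exact h1
  have e1 : Pr μ (fun w =>
        ((fun j : {j : Fin (n+1) // (j : ℕ) ≤ (i : ℕ)} => w.1 j.1)
          = fun j => z.1 j.1) ∧ w.2 i = z.2 i ∧
        ((fun j : {j : Fin (n+1) // (j : ℕ) < (i : ℕ)} => w.2 j.1)
          = fun j => z.2 j.1)) = Um μ z i ((i:ℕ)+1) := by
    refine Pr_congr μ fun w => ?_
    simp only [funext_iff, Subtype.forall, hlt_split]
  have e2 : Pr μ (fun w =>
        (fun j : {j : Fin (n+1) // (j : ℕ) < (i : ℕ)} => w.2 j.1)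
          = fun j => z.2 j.1) = Hm μ z i := by
    refine Pr_congr μ fun w => ?_
    simp only [funext_iff, Subtype.forall]
  have e3 : Pr μ (fun w =>
        ((fun j : {j : Fin (n+1) // (j : ℕ) ≤ (i : ℕ)} => w.1 j.1)
          = fun j => z.1 j.1) ∧
        ((fun j : {j : Fin (n+1) // (j : ℕ) < (i : ℕ)} => w.2 j.1)
          = fun j => z.2 j.1)) = Um μ z i i := by
    refine Pr_congr μ fun w => ?_
    simp only [funext_iff, Subtype.forall]
  have e4 : Pr μ (fun w => w.2 i = z.2 i ∧
        ((fun j : {j : Fin (n+1) // (j : ℕ) < (i : ℕ)} => w.2 j.1)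
          = fun j => z.2 j.1)) = Hm μ z ((i:ℕ)+1) := by
    refine Pr_congr μ fun w => ?_
    simp only [funext_iff, Subtype.forall, hlt_split]
  rw [e1, e2, e3, e4]

lemma MI_eq_DI (μ : (Fin (n+1) → Xa) × (Fin (n+1) → Ya) → ℝ)
    (hμ0 : ∀ z, 0 ≤ μ z) (hμ1 : ∑ z, μ z = 1)
    (hR : ∀ i : ℕ, i ≤ n → ∀ z, 0 < μ z →
      Gm μ z (i+1) * Um μ z i i = Gm μ z i * Um μ z i (i+1)) :
    MI μ = DI μ (fun z => z.1) (fun z => z.2) := by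
  classical
  have hDI : DI μ (fun z : (Fin (n+1) → Xa) × (Fin (n+1) → Ya) => z.1)
      (fun z => z.2) = ∑ z, ∑ i : Fin (n+1), μ z * Real.log
        (Um μ z i ((i:ℕ)+1) * Hm μ z i / (Um μ z i i * Hm μ z ((i:ℕ)+1))) := by
    unfold DI
    exact (Finset.sum_congr rfl fun i _ => CMI_term μ i).trans Finset.sum_comm
  rw [hDI]
  unfold MI
  refine Finset.sum_congr rfl fun z _ => ?_
  rcases eq_or_lt_of_le (hμ0 z) with hz | hz
  · rw [← hz]; simp
  · rw [← Finset.mul_sum]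
    congr 1
    have hUm : ∀ (i k : ℕ), 0 < Um μ z i k :=
      fun i k => Pr_pos hμ0 ⟨fun j _ => rfl, fun j _ => rfl⟩ hz
    have hGm : ∀ k, 0 < Gm μ z k :=
      fun k => Pr_pos hμ0 ⟨fun j => rfl, fun j _ => rfl⟩ hz
    have hHm : ∀ k, 0 < Hm μ z k := fun k => Pr_pos hμ0 (fun j _ => rfl) hz
    have hterm : ∀ i : Fin (n+1),
        Real.log (Um μ z i ((i:ℕ)+1) * Hm μ z i / (Um μ z i i * Hm μ z ((i:ℕ)+1)))
        = (Real.log (Gm μ z ((i:ℕ)+1)) - Real.log (Gm μ z (i:ℕ)))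
          + (Real.log (Hm μ z (i:ℕ)) - Real.log (Hm μ z ((i:ℕ)+1))) := by
      intro i
      have hRi := hR i (Nat.lt_succ_iff.mp i.isLt) z hz
      have harg : Um μ z i ((i:ℕ)+1) * Hm μ z i / (Um μ z i i * Hm μ z ((i:ℕ)+1))
          = (Gm μ z ((i:ℕ)+1) / Gm μ z (i:ℕ)) * (Hm μ z (i:ℕ) / Hm μ z ((i:ℕ)+1)) := by
        rw [div_mul_div_comm, div_eq_div_iff
          (mul_pos (hUm (i:ℕ) (i:ℕ)) (hHm ((i:ℕ)+1))).ne'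
          (mul_pos (hGm (i:ℕ)) (hHm ((i:ℕ)+1))).ne']
        linear_combination (-(Hm μ z (i:ℕ) * Hm μ z ((i:ℕ)+1))) * hRi
      rw [harg, Real.log_mul (div_pos (hGm _) (hGm _)).ne' (div_pos (hHm _) (hHm _)).ne',
        Real.log_div (hGm _).ne' (hGm _).ne', Real.log_div (hHm _).ne' (hHm _).ne']
    rw [Finset.sum_congr rfl fun i _ => hterm i]
    rw [Fin.sum_univ_eq_sum_range (fun k =>
      (Real.log (Gm μ z (k+1)) - Real.log (Gm μ z k))
        + (Real.log (Hm μ z k) - Real.log (Hm μ z (k+1)))) (n+1)]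
    rw [Finset.sum_add_distrib, Finset.sum_range_sub (fun k => Real.log (Gm μ z k)),
      Finset.sum_range_sub' (fun k => Real.log (Hm μ z k))]
    rw [← Gm_zero_eq μ z, ← Hm_top_eq μ z, ← Gm_top μ z,
      Real.log_div (hGm _).ne' (mul_pos (hGm 0) (hHm (n+1))).ne',
      Real.log_mul (hGm 0).ne' (hHm _).ne', Hm_zero μ hμ1 z, Real.log_one]
    ring


/-- The event-translation of the `i`-th Markov chain hypothesis: the two product
identities `E1` and `E2`. -/
lemma MC_E1E2 (μ : (Fin (n+1) → Xa) × (Fin (n+1) → Ya) → ℝ) (i : ℕ) (hi : i ≤ n)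
    (hMC : MC μ
      (fun z => (fun j : {j : Fin (n+1) // i < (j : ℕ)} => z.1 j.1))
      (fun z => (fun j : {j : Fin (n+1) // (j : ℕ) ≤ i} => z.1 j.1))
      (fun z => (fun j : {j : Fin (n+1) // (j : ℕ) ≤ i} => z.2 j.1)))
    (z : (Fin (n+1) → Xa) × (Fin (n+1) → Ya)) :
    Gm μ z (i+1) * Um μ z i 0 = Gm μ z 0 * Um μ z i (i+1) ∧
    Gm μ z i * Um μ z i 0 = Gm μ z 0 * Um μ z i i := by
  classical
  have hifin : i < n + 1 := Nat.lt_succ_of_le hi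
  set ifin : Fin (n+1) := ⟨i, hifin⟩ with hifin'
  constructor
  · have h := hMC (fun j => z.1 j.1) (fun j => z.1 j.1) (fun j => z.2 j.1)
    have e1 : Pr μ (fun w =>
          ((fun j : {j : Fin (n+1) // i < (j : ℕ)} => w.1 j.1) = fun j => z.1 j.1) ∧
          ((fun j : {j : Fin (n+1) // (j : ℕ) ≤ i} => w.1 j.1) = fun j => z.1 j.1) ∧
          ((fun j : {j : Fin (n+1) // (j : ℕ) ≤ i} => w.2 j.1) = fun j => z.2 j.1))
        = Gm μ z (i+1) := by
      refine Pr_congr μ fun w => ?_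
      simp only [funext_iff, Subtype.forall]
      constructor
      · rintro ⟨h1, h2, h3⟩
        exact ⟨fun j => (le_or_gt (j:ℕ) i).elim (h2 j) (fun hc => h1 j hc),
          fun j hj => h3 j (by omega)⟩
      · rintro ⟨h1, h2⟩
        exact ⟨fun j _ => h1 j, fun j _ => h1 j, fun j hj => h2 j (by omega)⟩
    have e2 : Pr μ (fun w =>
          (fun j : {j : Fin (n+1) // (j : ℕ) ≤ i} => w.1 j.1) = fun j => z.1 j.1)
        = Um μ z i 0 := by
      refine Pr_congr μ fun w => ?_
      simp only [funext_iff, Subtype.forall]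
      exact ⟨fun h1 => ⟨h1, fun j hj => absurd hj (by omega)⟩, fun h => h.1⟩
    have e3 : Pr μ (fun w =>
          ((fun j : {j : Fin (n+1) // i < (j : ℕ)} => w.1 j.1) = fun j => z.1 j.1) ∧
          ((fun j : {j : Fin (n+1) // (j : ℕ) ≤ i} => w.1 j.1) = fun j => z.1 j.1))
        = Gm μ z 0 := by
      refine Pr_congr μ fun w => ?_
      simp only [funext_iff, Subtype.forall]
      constructor
      · rintro ⟨h1, h2⟩
        exact ⟨fun j => (le_or_gt (j:ℕ) i).elim (h2 j) (fun hc => h1 j hc),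
          fun j hj => absurd hj (by omega)⟩
      · rintro ⟨h1, _⟩
        exact ⟨fun j _ => h1 j, fun j _ => h1 j⟩
    have e4 : Pr μ (fun w =>
          ((fun j : {j : Fin (n+1) // (j : ℕ) ≤ i} => w.1 j.1) = fun j => z.1 j.1) ∧
          ((fun j : {j : Fin (n+1) // (j : ℕ) ≤ i} => w.2 j.1) = fun j => z.2 j.1))
        = Um μ z i (i+1) := by
      refine Pr_congr μ fun w => ?_
      simp only [funext_iff, Subtype.forall]
      constructor
      · rintro ⟨h1, h2⟩
        exact ⟨h1, fun j hj => h2 j (by omega)⟩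
      · rintro ⟨h1, h2⟩
        exact ⟨h1, fun j hj => h2 j (by omega)⟩
    rw [e1, e2, e3, e4] at h
    exact h
  · -- E2 : sum the Markov identity over the value at coordinate `i`.
    have hsum : ∀ b : Ya,
        Pr μ (fun w =>
          ((fun j : {j : Fin (n+1) // i < (j : ℕ)} => w.1 j.1) = fun j => z.1 j.1) ∧
          ((fun j : {j : Fin (n+1) // (j : ℕ) ≤ i} => w.1 j.1) = fun j => z.1 j.1) ∧
          ((fun j : {j : Fin (n+1) // (j : ℕ) ≤ i} => w.2 j.1)
            = fun j => Function.update z.2 ifin b j.1)) *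
        Pr μ (fun w =>
          (fun j : {j : Fin (n+1) // (j : ℕ) ≤ i} => w.1 j.1) = fun j => z.1 j.1)
        = Pr μ (fun w =>
          ((fun j : {j : Fin (n+1) // i < (j : ℕ)} => w.1 j.1) = fun j => z.1 j.1) ∧
          ((fun j : {j : Fin (n+1) // (j : ℕ) ≤ i} => w.1 j.1) = fun j => z.1 j.1)) *
        Pr μ (fun w =>
          ((fun j : {j : Fin (n+1) // (j : ℕ) ≤ i} => w.1 j.1) = fun j => z.1 j.1) ∧
          ((fun j : {j : Fin (n+1) // (j : ℕ) ≤ i} => w.2 j.1)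
            = fun j => Function.update z.2 ifin b j.1)) :=
      fun b => hMC (fun j => z.1 j.1) (fun j => z.1 j.1)
        (fun j => Function.update z.2 ifin b j.1)
    have hupdate : ∀ (b : Ya) (w : (Fin (n+1) → Xa) × (Fin (n+1) → Ya)),
        ((fun j : {j : Fin (n+1) // (j : ℕ) ≤ i} => w.2 j.1)
          = fun j => Function.update z.2 ifin b j.1) ↔
        ((∀ j : Fin (n+1), (j:ℕ) < i → w.2 j = z.2 j) ∧ w.2 ifin = b) := by
      intro b w
      simp only [funext_iff, Subtype.forall]
      constructor
      · intro h
        refine ⟨fun j hj => ?_, ?_⟩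
        · rw [h j (by omega), Function.update_of_ne (fun hc => by
            have := congrArg Fin.val hc; simp [hifin'] at this; omega)]
        · rw [h ifin (by simp [hifin']), Function.update_self]
      · rintro ⟨h1, h2⟩ j hj
        rcases Nat.lt_or_ge (j:ℕ) i with hc | hc
        · rw [h1 j hc, Function.update_of_ne (fun hcon => by
            have := congrArg Fin.val hcon; simp [hifin'] at this; omega)]
        · have hji : j = ifin := Fin.ext (by simp [hifin']; omega)
          rw [hji, Function.update_self]; exact hji ▸ h2
    have hfib1 : (∑ b : Ya, Pr μ (fun w =>
          ((fun j : {j : Fin (n+1) // i < (j : ℕ)} => w.1 j.1) = fun j => z.1 j.1) ∧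
          ((fun j : {j : Fin (n+1) // (j : ℕ) ≤ i} => w.1 j.1) = fun j => z.1 j.1) ∧
          ((fun j : {j : Fin (n+1) // (j : ℕ) ≤ i} => w.2 j.1)
            = fun j => Function.update z.2 ifin b j.1)))
        = Gm μ z i := by
      rw [Gm, Pr_fiber μ _ (fun w => w.2 ifin)]
      refine Finset.sum_congr rfl fun b _ => ?_
      refine Pr_congr μ fun w => ?_
      rw [hupdate b w]
      simp only [funext_iff, Subtype.forall]
      constructor
      · rintro ⟨h1, h2, h3, h4⟩
        exact ⟨⟨fun j => (le_or_gt (j:ℕ) i).elim (h2 j) (fun hc => h1 j hc), h3⟩, h4⟩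
      · rintro ⟨⟨h1, h2⟩, h3⟩
        exact ⟨fun j _ => h1 j, fun j _ => h1 j, h2, h3⟩
    have hfib2 : (∑ b : Ya, Pr μ (fun w =>
          ((fun j : {j : Fin (n+1) // (j : ℕ) ≤ i} => w.1 j.1) = fun j => z.1 j.1) ∧
          ((fun j : {j : Fin (n+1) // (j : ℕ) ≤ i} => w.2 j.1)
            = fun j => Function.update z.2 ifin b j.1)))
        = Um μ z i i := by
      rw [Um, Pr_fiber μ _ (fun w => w.2 ifin)]
      refine Finset.sum_congr rfl fun b _ => ?_
      refine Pr_congr μ fun w => ?_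
      rw [hupdate b w]
      simp only [funext_iff, Subtype.forall]
      tauto
    have e2 : Pr μ (fun w =>
          (fun j : {j : Fin (n+1) // (j : ℕ) ≤ i} => w.1 j.1) = fun j => z.1 j.1)
        = Um μ z i 0 := by
      refine Pr_congr μ fun w => ?_
      simp only [funext_iff, Subtype.forall]
      exact ⟨fun h1 => ⟨h1, fun j hj => absurd hj (by omega)⟩, fun h => h.1⟩
    have e3 : Pr μ (fun w =>
          ((fun j : {j : Fin (n+1) // i < (j : ℕ)} => w.1 j.1) = fun j => z.1 j.1) ∧
          ((fun j : {j : Fin (n+1) // (j : ℕ) ≤ i} => w.1 j.1) = fun j => z.1 j.1))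
        = Gm μ z 0 := by
      refine Pr_congr μ fun w => ?_
      simp only [funext_iff, Subtype.forall]
      constructor
      · rintro ⟨h1, h2⟩
        exact ⟨fun j => (le_or_gt (j:ℕ) i).elim (h2 j) (fun hc => h1 j hc),
          fun j hj => absurd hj (by omega)⟩
      · rintro ⟨h1, _⟩
        exact ⟨fun j _ => h1 j, fun j _ => h1 j⟩
    calc Gm μ z i * Um μ z i 0
        = ∑ b : Ya, Pr μ (fun w =>
            ((fun j : {j : Fin (n+1) // i < (j : ℕ)} => w.1 j.1) = fun j => z.1 j.1) ∧
            ((fun j : {j : Fin (n+1) // (j : ℕ) ≤ i} => w.1 j.1) = fun j => z.1 j.1) ∧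
            ((fun j : {j : Fin (n+1) // (j : ℕ) ≤ i} => w.2 j.1)
              = fun j => Function.update z.2 ifin b j.1)) *
          Pr μ (fun w =>
            (fun j : {j : Fin (n+1) // (j : ℕ) ≤ i} => w.1 j.1) = fun j => z.1 j.1) := by
          rw [← Finset.sum_mul, hfib1, e2]
      _ = ∑ b : Ya, Pr μ (fun w =>
            ((fun j : {j : Fin (n+1) // i < (j : ℕ)} => w.1 j.1) = fun j => z.1 j.1) ∧
            ((fun j : {j : Fin (n+1) // (j : ℕ) ≤ i} => w.1 j.1) = fun j => z.1 j.1)) *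
          Pr μ (fun w =>
            ((fun j : {j : Fin (n+1) // (j : ℕ) ≤ i} => w.1 j.1) = fun j => z.1 j.1) ∧
            ((fun j : {j : Fin (n+1) // (j : ℕ) ≤ i} => w.2 j.1)
              = fun j => Function.update z.2 ifin b j.1)) :=
          Finset.sum_congr rfl fun b _ => hsum b
      _ = Gm μ z 0 * Um μ z i i := by
          rw [← Finset.mul_sum, hfib2, e3]

lemma Um_top (μ : (Fin (n+1) → Xa) × (Fin (n+1) → Ya) → ℝ) (z) (k : ℕ) :
    Um μ z n k = Gm μ z k := by
  refine Pr_congr μ fun w => ?_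
  constructor
  · rintro ⟨h1, h2⟩
    exact ⟨fun j => h1 j (by omega), h2⟩
  · rintro ⟨h1, h2⟩
    exact ⟨fun j _ => h1 j, h2⟩

lemma hR_of_MC (μ : (Fin (n+1) → Xa) × (Fin (n+1) → Ya) → ℝ)
    (hμ0 : ∀ z, 0 ≤ μ z)
    (hMC : ∀ i : ℕ, ∀ _ : i < n, MC μ
      (fun z => (fun j : {j : Fin (n+1) // i < (j : ℕ)} => z.1 j.1))
      (fun z => (fun j : {j : Fin (n+1) // (j : ℕ) ≤ i} => z.1 j.1))
      (fun z => (fun j : {j : Fin (n+1) // (j : ℕ) ≤ i} => z.2 j.1))) :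
    ∀ i : ℕ, i ≤ n → ∀ z, 0 < μ z →
      Gm μ z (i+1) * Um μ z i i = Gm μ z i * Um μ z i (i+1) := by
  intro i hi z hz
  rcases lt_or_eq_of_le hi with hlt | heq
  · obtain ⟨hE1, hE2⟩ := MC_E1E2 μ i hi (hMC i hlt) z
    have hU0 : 0 < Um μ z i 0 := Pr_pos hμ0 ⟨fun j _ => rfl, fun j _ => rfl⟩ hz
    have hcalc : Gm μ z (i+1) * Um μ z i i * Um μ z i 0 * Gm μ z 0
        = Gm μ z i * Um μ z i (i+1) * Um μ z i 0 * Gm μ z 0 := by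
      linear_combination (Um μ z i i * Gm μ z 0) * hE1
        - (Um μ z i (i+1) * Gm μ z 0) * hE2
    have hG0 : 0 < Gm μ z 0 := Pr_pos hμ0 ⟨fun j => rfl, fun j _ => rfl⟩ hz
    have := mul_right_cancel₀ hG0.ne' hcalc
    exact mul_right_cancel₀ hU0.ne' this
  · subst heq
    rw [Um_top, Um_top, mul_comm]


noncomputable def Fq (q : Fin (n+1) → (Fin (n+1) → Xa) → (Fin (n+1) → Ya) → Ya → ℝ)
    (k : ℕ) (x : Fin (n+1) → Xa) (y : Fin (n+1) → Ya) : ℝ :=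
  ∏ i ∈ Finset.univ.filter (fun i : Fin (n+1) => (i:ℕ) < k), q i x y (y i)

lemma Fq_zero (q : Fin (n+1) → (Fin (n+1) → Xa) → (Fin (n+1) → Ya) → Ya → ℝ)
    (x y) : Fq q 0 x y = 1 := by
  unfold Fq
  rw [show Finset.univ.filter (fun i : Fin (n+1) => (i:ℕ) < 0) = ∅ by
    ext i; simp]
  simp

section NAside

variable (PX : (Fin (n+1) → Xa) → ℝ) (K : (Fin (n+1) → Xa) → (Fin (n+1) → Ya) → ℝ)
  (q : Fin (n+1) → (Fin (n+1) → Xa) → (Fin (n+1) → Ya) → Ya → ℝ)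

lemma NA_Pr1
    (hq1 : ∀ i x y, ∑ b, q i x y b = 1)
    (hqc : ∀ (i : Fin (n+1)) x x' y y', (∀ j : Fin (n+1), (j : ℕ) ≤ (i : ℕ) → x j = x' j) →
      (∀ j : Fin (n+1), (j : ℕ) < (i : ℕ) → y j = y' j) → q i x y = q i x' y')
    (hqK : ∀ x y, K x y = ∏ i, q i x y (y i))
    (k : ℕ) (hk : k ≤ n+1) (x : Fin (n+1) → Xa) (y : Fin (n+1) → Ya) :
    Pr (fun z : (Fin (n+1) → Xa) × (Fin (n+1) → Ya) => PX z.1 * K z.1 z.2)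
      (fun w => (∀ j, w.1 j = x j) ∧ ∀ j : Fin (n+1), (j:ℕ) < k → w.2 j = y j)
    = PX x * Fq q k x y := by
  classical
  rw [Pr_eq, Fintype.sum_prod_type,
    Finset.sum_eq_single_of_mem x (Finset.mem_univ x) (fun x' _ hx =>
      Finset.sum_eq_zero fun y' _ => if_neg (fun hcon => hx (funext hcon.1)))]
  have h1 : ∀ y' : Fin (n+1) → Ya,
      ((∀ j, (x, y').1 j = x j) ∧ ∀ j : Fin (n+1), (j:ℕ) < k → (x, y').2 j = y j) ↔
      (∀ j : Fin (n+1), (j:ℕ) < k → y' j = y j) :=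
    fun y' => ⟨fun h => h.2, fun h => ⟨fun _ => rfl, h⟩⟩
  have h2 : ∀ y' : Fin (n+1) → Ya,
      (if ((∀ j, (x, y').1 j = x j) ∧ ∀ j : Fin (n+1), (j:ℕ) < k → (x, y').2 j = y j)
        then PX (x, y').1 * K (x, y').1 (x, y').2 else 0)
      = PX x * (if (∀ j : Fin (n+1), (j:ℕ) < k → y' j = y j)
        then ∏ i, q i x y' (y' i) else 0) := by
    intro y'
    rw [if_congr (h1 y') rfl rfl, hqK]
    split <;> simp
  rw [Finset.sum_congr rfl fun y' _ => h2 y', ← Finset.mul_sum]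
  congr 1
  exact sum_prefix (n+1) (fun i y b => q i x y b) (fun i y => hq1 i x y)
    (fun i y y' h => hqc i x x y y' (fun _ _ => rfl) h) (n+1-k) k (by omega) y

open Classical in
lemma NA_Pr2
    (hq1 : ∀ i x y, ∑ b, q i x y b = 1)
    (hqc : ∀ (i : Fin (n+1)) x x' y y', (∀ j : Fin (n+1), (j : ℕ) ≤ (i : ℕ) → x j = x' j) →
      (∀ j : Fin (n+1), (j : ℕ) < (i : ℕ) → y j = y' j) → q i x y = q i x' y')
    (hqK : ∀ x y, K x y = ∏ i, q i x y (y i))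
    (i k : ℕ) (hk : k ≤ i+1) (hkn : k ≤ n+1) (x : Fin (n+1) → Xa) (y : Fin (n+1) → Ya) :
    Pr (fun z : (Fin (n+1) → Xa) × (Fin (n+1) → Ya) => PX z.1 * K z.1 z.2)
      (fun w => (∀ j : Fin (n+1), (j:ℕ) ≤ i → w.1 j = x j) ∧
        ∀ j : Fin (n+1), (j:ℕ) < k → w.2 j = y j)
    = (∑ x', if (∀ j : Fin (n+1), (j:ℕ) ≤ i → x' j = x j) then PX x' else 0)
        * Fq q k x y := by
  classical
  rw [Pr_eq, Fintype.sum_prod_type, Finset.sum_mul]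
  refine Finset.sum_congr rfl fun x' _ => ?_
  by_cases hx : ∀ j : Fin (n+1), (j:ℕ) ≤ i → x' j = x j
  · rw [if_pos hx]
    have h2 : ∀ y' : Fin (n+1) → Ya,
        (if ((∀ j : Fin (n+1), (j:ℕ) ≤ i → (x', y').1 j = x j) ∧
            ∀ j : Fin (n+1), (j:ℕ) < k → (x', y').2 j = y j)
          then PX (x', y').1 * K (x', y').1 (x', y').2 else 0)
        = PX x' * (if (∀ j : Fin (n+1), (j:ℕ) < k → y' j = y j)
          then ∏ i, q i x' y' (y' i) else 0) := by
      intro y'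
      rw [if_congr ⟨fun h => h.2, fun h => ⟨hx, h⟩⟩ rfl rfl, hqK]
      split <;> simp
    rw [Finset.sum_congr rfl fun y' _ => h2 y', ← Finset.mul_sum]
    congr 1
    rw [sum_prefix (n+1) (fun i y b => q i x' y b) (fun i y => hq1 i x' y)
      (fun i y y' h => hqc i x' x' y y' (fun _ _ => rfl) h) (n+1-k) k (by omega) y]
    refine Finset.prod_congr rfl fun j hj => ?_
    simp only [Finset.mem_filter] at hj
    have : q j x' y = q j x y :=
      hqc j x' x y y (fun j' hj' => hx j' (by omega)) (fun _ _ => rfl)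
    rw [this]
  · rw [if_neg hx, zero_mul]
    exact Finset.sum_eq_zero fun y' _ => if_neg fun hcon => hx hcon.1

open Classical in
lemma hR_of_NA
    (hq1 : ∀ i x y, ∑ b, q i x y b = 1)
    (hqc : ∀ (i : Fin (n+1)) x x' y y', (∀ j : Fin (n+1), (j : ℕ) ≤ (i : ℕ) → x j = x' j) →
      (∀ j : Fin (n+1), (j : ℕ) < (i : ℕ) → y j = y' j) → q i x y = q i x' y')
    (hqK : ∀ x y, K x y = ∏ i, q i x y (y i)) :
    ∀ i : ℕ, i ≤ n → ∀ z : (Fin (n+1) → Xa) × (Fin (n+1) → Ya),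
      Gm (fun z => PX z.1 * K z.1 z.2) z (i+1) * Um (fun z => PX z.1 * K z.1 z.2) z i i
      = Gm (fun z => PX z.1 * K z.1 z.2) z i
        * Um (fun z => PX z.1 * K z.1 z.2) z i (i+1) := by
  intro i hi z
  have e1 : Gm (fun z => PX z.1 * K z.1 z.2) z (i+1) = PX z.1 * Fq q (i+1) z.1 z.2 :=
    NA_Pr1 PX K q hq1 hqc hqK (i+1) (by omega) z.1 z.2
  have e0 : Gm (fun z => PX z.1 * K z.1 z.2) z i = PX z.1 * Fq q i z.1 z.2 :=
    NA_Pr1 PX K q hq1 hqc hqK i (by omega) z.1 z.2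
  have u1 : Um (fun z => PX z.1 * K z.1 z.2) z i i
      = (∑ x', if (∀ j : Fin (n+1), (j:ℕ) ≤ i → x' j = z.1 j) then PX x' else 0)
        * Fq q i z.1 z.2 :=
    NA_Pr2 PX K q hq1 hqc hqK i i (by omega) (by omega) z.1 z.2
  have u2 : Um (fun z => PX z.1 * K z.1 z.2) z i (i+1)
      = (∑ x', if (∀ j : Fin (n+1), (j:ℕ) ≤ i → x' j = z.1 j) then PX x' else 0)
        * Fq q (i+1) z.1 z.2 :=
    NA_Pr2 PX K q hq1 hqc hqK i (i+1) (by omega) (by omega) z.1 z.2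
  rw [e1, e0, u1, u2]
  ring


lemma MC_of_NA [Nonempty Ya]
    (hq1 : ∀ i x y, ∑ b, q i x y b = 1)
    (hqc : ∀ (i : Fin (n+1)) x x' y y', (∀ j : Fin (n+1), (j : ℕ) ≤ (i : ℕ) → x j = x' j) →
      (∀ j : Fin (n+1), (j : ℕ) < (i : ℕ) → y j = y' j) → q i x y = q i x' y')
    (hqK : ∀ x y, K x y = ∏ i, q i x y (y i)) :
    ∀ i : ℕ, i < n → MC (fun z : (Fin (n+1) → Xa) × (Fin (n+1) → Ya) => PX z.1 * K z.1 z.2)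
      (fun z => (fun j : {j : Fin (n+1) // i < (j : ℕ)} => z.1 j.1))
      (fun z => (fun j : {j : Fin (n+1) // (j : ℕ) ≤ i} => z.1 j.1))
      (fun z => (fun j : {j : Fin (n+1) // (j : ℕ) ≤ i} => z.2 j.1)) := by
  classical
  intro i hi a b c
  set μ := fun z : (Fin (n+1) → Xa) × (Fin (n+1) → Ya) => PX z.1 * K z.1 z.2 with hμdef
  set x₀ : Fin (n+1) → Xa :=
    fun j => if h : (j:ℕ) ≤ i then b ⟨j, h⟩ else a ⟨j, by omega⟩ with hx₀
  set y₀ : Fin (n+1) → Ya :=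
    fun j => if h : (j:ℕ) ≤ i then c ⟨j, h⟩ else Classical.arbitrary Ya with hy₀
  have e1 : Pr μ (fun w =>
        ((fun j : {j : Fin (n+1) // i < (j : ℕ)} => w.1 j.1) = a) ∧
        ((fun j : {j : Fin (n+1) // (j : ℕ) ≤ i} => w.1 j.1) = b) ∧
        ((fun j : {j : Fin (n+1) // (j : ℕ) ≤ i} => w.2 j.1) = c))
      = PX x₀ * Fq q (i+1) x₀ y₀ := by
    rw [← NA_Pr1 PX K q hq1 hqc hqK (i+1) (by omega) x₀ y₀]
    refine Pr_congr μ fun w => ?_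
    simp only [funext_iff, Subtype.forall]
    constructor
    · rintro ⟨h1, h2, h3⟩
      refine ⟨fun j => ?_, fun j hj => ?_⟩
      · by_cases hj : (j:ℕ) ≤ i
        · rw [h2 j hj, hx₀]; simp only; rw [dif_pos hj]
        · rw [h1 j (by omega), hx₀]; simp only; rw [dif_neg hj]
      · have hj' : (j:ℕ) ≤ i := by omega
        rw [h3 j hj', hy₀]; simp only; rw [dif_pos hj']
    · rintro ⟨h1, h2⟩
      refine ⟨fun j hj => ?_, fun j hj => ?_, fun j hj => ?_⟩
      · rw [h1 j, hx₀]; simp only; rw [dif_neg (by omega)]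
      · rw [h1 j, hx₀]; simp only; rw [dif_pos hj]
      · rw [h2 j (by omega), hy₀]; simp only; rw [dif_pos hj]
  have e2 : Pr μ (fun w =>
        (fun j : {j : Fin (n+1) // (j : ℕ) ≤ i} => w.1 j.1) = b)
      = (∑ x', if (∀ j : Fin (n+1), (j:ℕ) ≤ i → x' j = x₀ j) then PX x' else 0)
        * Fq q 0 x₀ y₀ := by
    rw [← NA_Pr2 PX K q hq1 hqc hqK i 0 (by omega) (by omega) x₀ y₀]
    refine Pr_congr μ fun w => ?_
    simp only [funext_iff, Subtype.forall]
    constructor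
    · intro h1
      exact ⟨fun j hj => by rw [h1 j hj, hx₀]; simp only; rw [dif_pos hj],
        fun j hj => absurd hj (by omega)⟩
    · rintro ⟨h1, _⟩ j hj
      rw [h1 j hj, hx₀]; simp only; rw [dif_pos hj]
  have e3 : Pr μ (fun w =>
        ((fun j : {j : Fin (n+1) // i < (j : ℕ)} => w.1 j.1) = a) ∧
        ((fun j : {j : Fin (n+1) // (j : ℕ) ≤ i} => w.1 j.1) = b))
      = PX x₀ * Fq q 0 x₀ y₀ := by
    rw [← NA_Pr1 PX K q hq1 hqc hqK 0 (by omega) x₀ y₀]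
    refine Pr_congr μ fun w => ?_
    simp only [funext_iff, Subtype.forall]
    constructor
    · rintro ⟨h1, h2⟩
      refine ⟨fun j => ?_, fun j hj => absurd hj (by omega)⟩
      by_cases hj : (j:ℕ) ≤ i
      · rw [h2 j hj, hx₀]; simp only; rw [dif_pos hj]
      · rw [h1 j (by omega), hx₀]; simp only; rw [dif_neg hj]
    · rintro ⟨h1, _⟩
      refine ⟨fun j hj => ?_, fun j hj => ?_⟩
      · rw [h1 j, hx₀]; simp only; rw [dif_neg (by omega)]
      · rw [h1 j, hx₀]; simp only; rw [dif_pos hj]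
  have e4 : Pr μ (fun w =>
        ((fun j : {j : Fin (n+1) // (j : ℕ) ≤ i} => w.1 j.1) = b) ∧
        ((fun j : {j : Fin (n+1) // (j : ℕ) ≤ i} => w.2 j.1) = c))
      = (∑ x', if (∀ j : Fin (n+1), (j:ℕ) ≤ i → x' j = x₀ j) then PX x' else 0)
        * Fq q (i+1) x₀ y₀ := by
    rw [← NA_Pr2 PX K q hq1 hqc hqK i (i+1) (by omega) (by omega) x₀ y₀]
    refine Pr_congr μ fun w => ?_
    simp only [funext_iff, Subtype.forall]
    constructor
    · rintro ⟨h1, h2⟩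
      refine ⟨fun j hj => ?_, fun j hj => ?_⟩
      · rw [h1 j hj, hx₀]; simp only; rw [dif_pos hj]
      · have hj' : (j:ℕ) ≤ i := by omega
        rw [h2 j hj', hy₀]; simp only; rw [dif_pos hj']
    · rintro ⟨h1, h2⟩
      refine ⟨fun j hj => ?_, fun j hj => ?_⟩
      · rw [h1 j hj, hx₀]; simp only; rw [dif_pos hj]
      · rw [h2 j (by omega), hy₀]; simp only; rw [dif_pos hj]
  rw [e1, e2, e3, e4]
  ring

end NAside

lemma MC_top (μ : (Fin (n+1) → Xa) × (Fin (n+1) → Ya) → ℝ) :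
    MC μ (fun z => (fun j : {j : Fin (n+1) // n < (j : ℕ)} => z.1 j.1))
      (fun z => (fun j : {j : Fin (n+1) // (j : ℕ) ≤ n} => z.1 j.1))
      (fun z => (fun j : {j : Fin (n+1) // (j : ℕ) ≤ n} => z.2 j.1)) := by
  intro a b c
  have hfa : ∀ w : (Fin (n+1) → Xa) × (Fin (n+1) → Ya),
      ((fun j : {j : Fin (n+1) // n < (j : ℕ)} => w.1 j.1) = a) :=
    fun w => funext fun j => ((by have := j.1.isLt; omega : False).elim)
  have h1 : Pr μ (fun w =>
        ((fun j : {j : Fin (n+1) // n < (j : ℕ)} => w.1 j.1) = a) ∧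
        ((fun j : {j : Fin (n+1) // (j : ℕ) ≤ n} => w.1 j.1) = b) ∧
        ((fun j : {j : Fin (n+1) // (j : ℕ) ≤ n} => w.2 j.1) = c))
      = Pr μ (fun w =>
        ((fun j : {j : Fin (n+1) // (j : ℕ) ≤ n} => w.1 j.1) = b) ∧
        ((fun j : {j : Fin (n+1) // (j : ℕ) ≤ n} => w.2 j.1) = c)) :=
    Pr_congr μ fun w => ⟨fun h => h.2, fun h => ⟨hfa w, h⟩⟩
  have h2 : Pr μ (fun w =>
        ((fun j : {j : Fin (n+1) // n < (j : ℕ)} => w.1 j.1) = a) ∧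
        ((fun j : {j : Fin (n+1) // (j : ℕ) ≤ n} => w.1 j.1) = b))
      = Pr μ (fun w =>
        (fun j : {j : Fin (n+1) // (j : ℕ) ≤ n} => w.1 j.1) = b) :=
    Pr_congr μ fun w => ⟨fun h => h.2, fun h => ⟨hfa w, h⟩⟩
  rw [h1, h2, mul_comm]

lemma Gm_zero_PX (PX : (Fin (n+1) → Xa) → ℝ)
    (K : (Fin (n+1) → Xa) → (Fin (n+1) → Ya) → ℝ) (hK1 : ∀ x, ∑ y, K x y = 1)
    (x : Fin (n+1) → Xa) (y : Fin (n+1) → Ya) :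
    Gm (fun z : (Fin (n+1) → Xa) × (Fin (n+1) → Ya) => PX z.1 * K z.1 z.2) (x, y) 0
      = PX x := by
  rw [Gm_zero_eq]
  show (∑ y', PX x * K x y') = PX x
  rw [← Finset.mul_sum, hK1, mul_one]

noncomputable def denNA (μ : (Fin (n+1) → Xa) × (Fin (n+1) → Ya) → ℝ)
    (i : Fin (n+1)) (x : Fin (n+1) → Xa) (y : Fin (n+1) → Ya) : ℝ :=
  Pr μ (fun w => (∀ j : Fin (n+1), (j:ℕ) ≤ (i:ℕ) → w.1 j = x j) ∧
    ∀ j : Fin (n+1), (j:ℕ) < (i:ℕ) → w.2 j = y j)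

noncomputable def numNA (μ : (Fin (n+1) → Xa) × (Fin (n+1) → Ya) → ℝ)
    (i : Fin (n+1)) (x : Fin (n+1) → Xa) (y : Fin (n+1) → Ya) (b : Ya) : ℝ :=
  Pr μ (fun w => ((∀ j : Fin (n+1), (j:ℕ) ≤ (i:ℕ) → w.1 j = x j) ∧
    ∀ j : Fin (n+1), (j:ℕ) < (i:ℕ) → w.2 j = y j) ∧ w.2 i = b)

noncomputable def qNA (μ : (Fin (n+1) → Xa) × (Fin (n+1) → Ya) → ℝ)
    (i : Fin (n+1)) (x : Fin (n+1) → Xa) (y : Fin (n+1) → Ya) (b : Ya) : ℝ :=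
  if 0 < denNA μ i x y then numNA μ i x y b / denNA μ i x y
  else (Fintype.card Ya : ℝ)⁻¹

lemma qNA_nonneg (μ : (Fin (n+1) → Xa) × (Fin (n+1) → Ya) → ℝ)
    (hμ0 : ∀ z, 0 ≤ μ z) (i x y b) : 0 ≤ qNA μ i x y b := by
  unfold qNA
  split
  · exact div_nonneg (Pr_nonneg hμ0 _) (le_of_lt (by assumption))
  · simp

lemma qNA_sum [Nonempty Ya] (μ : (Fin (n+1) → Xa) × (Fin (n+1) → Ya) → ℝ)
    (i x y) : ∑ b, qNA μ i x y b = 1 := by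
  by_cases h : 0 < denNA μ i x y
  · simp only [qNA, if_pos h]
    rw [← Finset.sum_div]
    have hsum : (∑ b, numNA μ i x y b) = denNA μ i x y :=
      (Pr_fiber μ _ (fun w => w.2 i)).symm
    rw [hsum, div_self h.ne']
  · simp only [qNA, if_neg h]
    rw [Finset.sum_const, Finset.card_univ, nsmul_eq_mul]
    exact mul_inv_cancel₀ (Nat.cast_ne_zero.mpr Fintype.card_ne_zero)

lemma qNA_causal (μ : (Fin (n+1) → Xa) × (Fin (n+1) → Ya) → ℝ)
    (i : Fin (n+1)) (x x' : Fin (n+1) → Xa) (y y' : Fin (n+1) → Ya)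
    (hx : ∀ j : Fin (n+1), (j:ℕ) ≤ (i:ℕ) → x j = x' j)
    (hy : ∀ j : Fin (n+1), (j:ℕ) < (i:ℕ) → y j = y' j) :
    qNA μ i x y = qNA μ i x' y' := by
  have hd : denNA μ i x y = denNA μ i x' y' := by
    refine Pr_congr μ fun w => ?_
    constructor
    · rintro ⟨h1, h2⟩
      exact ⟨fun j hj => (h1 j hj).trans (hx j hj), fun j hj => (h2 j hj).trans (hy j hj)⟩
    · rintro ⟨h1, h2⟩
      exact ⟨fun j hj => (h1 j hj).trans (hx j hj).symm,
        fun j hj => (h2 j hj).trans (hy j hj).symm⟩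
  have hn : ∀ b, numNA μ i x y b = numNA μ i x' y' b := by
    intro b
    refine Pr_congr μ fun w => ?_
    constructor
    · rintro ⟨⟨h1, h2⟩, h3⟩
      exact ⟨⟨fun j hj => (h1 j hj).trans (hx j hj),
        fun j hj => (h2 j hj).trans (hy j hj)⟩, h3⟩
    · rintro ⟨⟨h1, h2⟩, h3⟩
      exact ⟨⟨fun j hj => (h1 j hj).trans (hx j hj).symm,
        fun j hj => (h2 j hj).trans (hy j hj).symm⟩, h3⟩
  funext b
  simp only [qNA, hd, hn]

lemma exists_NA_kernel [Nonempty Ya] (PX : (Fin (n+1) → Xa) → ℝ)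
    (hPX0 : ∀ x, 0 ≤ PX x)
    (K : (Fin (n+1) → Xa) → (Fin (n+1) → Ya) → ℝ)
    (hK0 : ∀ x y, 0 ≤ K x y) (hK1 : ∀ x, ∑ y, K x y = 1)
    (hMC : ∀ i : ℕ, ∀ _ : i < n,
      MC (fun z : (Fin (n+1) → Xa) × (Fin (n+1) → Ya) => PX z.1 * K z.1 z.2)
        (fun z => (fun j : {j : Fin (n+1) // i < (j : ℕ)} => z.1 j.1))
        (fun z => (fun j : {j : Fin (n+1) // (j : ℕ) ≤ i} => z.1 j.1))
        (fun z => (fun j : {j : Fin (n+1) // (j : ℕ) ≤ i} => z.2 j.1))) :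
    ∃ K' : (Fin (n+1) → Xa) → (Fin (n+1) → Ya) → ℝ,
      (∀ x y, 0 ≤ K' x y) ∧ (∀ x, ∑ y, K' x y = 1) ∧
      (∃ q : Fin (n+1) → (Fin (n+1) → Xa) → (Fin (n+1) → Ya) → Ya → ℝ,
        (∀ i x y b, 0 ≤ q i x y b) ∧ (∀ i x y, ∑ b, q i x y b = 1) ∧
        (∀ (i : Fin (n+1)) x x' y y',
          (∀ j : Fin (n+1), (j : ℕ) ≤ (i : ℕ) → x j = x' j) →
          (∀ j : Fin (n+1), (j : ℕ) < (i : ℕ) → y j = y' j) → q i x y = q i x' y') ∧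
        (∀ x y, K' x y = ∏ i, q i x y (y i))) ∧
      (∀ x y, PX x * K' x y = PX x * K x y) := by
  classical
  set μ := fun z : (Fin (n+1) → Xa) × (Fin (n+1) → Ya) => PX z.1 * K z.1 z.2 with hμdef
  have hμ0 : ∀ z, 0 ≤ μ z := fun z => mul_nonneg (hPX0 _) (hK0 _ _)
  refine ⟨fun x y => ∏ i, qNA μ i x y (y i),
    fun x y => Finset.prod_nonneg fun i _ => qNA_nonneg μ hμ0 i x y (y i),
    ?_, ⟨fun i x y b => qNA μ i x y b,
      fun i x y b => qNA_nonneg μ hμ0 i x y b,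
      fun i x y => qNA_sum μ i x y,
      fun i x x' y y' hx hy => qNA_causal μ i x x' y y' hx hy,
      fun x y => rfl⟩, ?_⟩
  · -- rows sum to one
    intro x
    have h := sum_prefix (n+1) (fun i y b => qNA μ i x y b)
      (fun i y => qNA_sum μ i x y)
      (fun i y y' hy => qNA_causal μ i x x y y' (fun _ _ => rfl) hy)
      (n+1) 0 (by omega) (Classical.arbitrary _)
    have h2 : Finset.univ.filter (fun i : Fin (n+1) => (i:ℕ) < 0) = ∅ := by
      ext i; simp
    rw [h2, Finset.prod_empty] at h
    rw [← h]
    refine Finset.sum_congr rfl fun y' _ => ?_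
    rw [if_pos (fun j hj => absurd hj (by omega))]
  · -- the kernel equality
    intro x y
    rcases eq_or_lt_of_le (hPX0 x) with hx0 | hx0
    · rw [← hx0, zero_mul, zero_mul]
    · have hG0 : Gm μ (x, y) 0 = PX x := Gm_zero_PX PX K hK1 x y
      have hclaim : ∀ k : ℕ, k ≤ n+1 →
          Gm μ (x, y) k = Gm μ (x, y) 0 *
            ∏ i ∈ Finset.univ.filter (fun i : Fin (n+1) => (i:ℕ) < k),
              qNA μ i x y (y i) := by
        intro k
        induction k with
        | zero =>
          intro _
          rw [show Finset.univ.filter (fun i : Fin (n+1) => (i:ℕ) < 0) = ∅ by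
            ext i; simp]
          simp
        | succ k ih =>
          intro hk1
          have hk : k ≤ n := by omega
          have hkfin : k < n + 1 := by omega
          set kf : Fin (n+1) := ⟨k, hkfin⟩ with hkf
          have hMCk : MC μ
              (fun z => (fun j : {j : Fin (n+1) // k < (j : ℕ)} => z.1 j.1))
              (fun z => (fun j : {j : Fin (n+1) // (j : ℕ) ≤ k} => z.1 j.1))
              (fun z => (fun j : {j : Fin (n+1) // (j : ℕ) ≤ k} => z.2 j.1)) := by
            rcases lt_or_eq_of_le hk with hlt | heq
            · exact hMC k hlt
            · subst heq; exact MC_top μ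
          obtain ⟨hE1, hE2⟩ := MC_E1E2 μ k hk hMCk (x, y)
          have hkfval : (kf:ℕ) = k := rfl
          have hs : 0 < Um μ (x, y) k 0 := by
            have hle : Gm μ (x, y) 0 ≤ Um μ (x, y) k 0 := by
              unfold Gm Um
              exact Pr_mono hμ0 (fun w hw => ⟨fun j _ => hw.1 j, hw.2⟩)
            refine lt_of_lt_of_le ?_ hle
            rw [hG0]
            exact hx0
          have hins : Finset.univ.filter (fun i : Fin (n+1) => (i:ℕ) < k+1)
              = insert kf (Finset.univ.filter (fun i : Fin (n+1) => (i:ℕ) < k)) := by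
            ext i
            simp only [Finset.mem_filter, Finset.mem_univ, true_and, Finset.mem_insert,
              Fin.ext_iff, hkf]
            omega
          have hnot : kf ∉ Finset.univ.filter (fun i : Fin (n+1) => (i:ℕ) < k) := by
            simp [hkf]
          rw [hins, Finset.prod_insert hnot]
          have hden : denNA μ kf x y = Um μ (x, y) k k := rfl
          have hnum : numNA μ kf x y (y kf) = Um μ (x, y) k (k+1) := by
            refine Pr_congr μ fun w => ?_
            constructor
            · rintro ⟨⟨h1, h2⟩, h3⟩
              refine ⟨h1, fun j hj => ?_⟩
              rcases Nat.lt_or_ge (j:ℕ) k with hc | hc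
              · exact h2 j hc
              · have : j = kf := Fin.ext (by rw [hkfval]; omega)
                rw [this]; exact h3
            · rintro ⟨h1, h2⟩
              exact ⟨⟨h1, fun j hj => h2 j (by omega)⟩, h2 kf (by rw [hkfval]; omega)⟩
          by_cases hu : 0 < Um μ (x, y) k k
          · have hq : qNA μ kf x y (y kf)
                = Um μ (x, y) k (k+1) / Um μ (x, y) k k := by
              rw [qNA, if_pos (hden ▸ hu), hden, hnum]
            have hv : Gm μ (x, y) (k+1) = Gm μ (x, y) 0 * Um μ (x, y) k (k+1)
                / Um μ (x, y) k 0 := by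
              rw [eq_div_iff hs.ne']; exact hE1
            have hGmk : Gm μ (x, y) k = Gm μ (x, y) 0 * Um μ (x, y) k k
                / Um μ (x, y) k 0 := by
              rw [eq_div_iff hs.ne']; exact hE2
            calc Gm μ (x, y) (k+1)
                = Gm μ (x, y) 0 * Um μ (x, y) k (k+1) / Um μ (x, y) k 0 := hv
              _ = (Gm μ (x, y) 0 * Um μ (x, y) k k / Um μ (x, y) k 0)
                  * (Um μ (x, y) k (k+1) / Um μ (x, y) k k) := by
                  field_simp
              _ = Gm μ (x, y) k * (Um μ (x, y) k (k+1) / Um μ (x, y) k k) := by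
                  rw [← hGmk]
              _ = (Gm μ (x, y) 0 *
                    ∏ i ∈ Finset.univ.filter (fun i : Fin (n+1) => (i:ℕ) < k),
                      qNA μ i x y (y i)) * (Um μ (x, y) k (k+1) / Um μ (x, y) k k) := by
                  rw [← ih (by omega)]
              _ = Gm μ (x, y) 0 * (qNA μ kf x y (y kf) *
                    ∏ i ∈ Finset.univ.filter (fun i : Fin (n+1) => (i:ℕ) < k),
                      qNA μ i x y (y i)) := by
                  rw [hq]; ring
          · have hu0 : Um μ (x, y) k k = 0 :=
              le_antisymm (not_lt.mp hu) (Pr_nonneg hμ0 _)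
            have hv0 : Um μ (x, y) k (k+1) = 0 := by
              refine le_antisymm ?_ (Pr_nonneg hμ0 _)
              rw [← hu0]
              exact Pr_mono hμ0 fun w hw => ⟨hw.1, fun j hj => hw.2 j (by omega)⟩
            have h1 : Gm μ (x, y) (k+1) = 0 := by
              have := hE1
              rw [hv0, mul_zero] at this
              exact (mul_eq_zero.mp this).resolve_right hs.ne'
            have h2 : Gm μ (x, y) k = 0 := by
              have := hE2
              rw [hu0, mul_zero] at this
              exact (mul_eq_zero.mp this).resolve_right hs.ne'
            have h3 : Gm μ (x, y) 0 *
                (∏ i ∈ Finset.univ.filter (fun i : Fin (n+1) => (i:ℕ) < k),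
                  qNA μ i x y (y i)) = 0 := (ih (by omega)).symm.trans h2
            rw [h1, show Gm μ (x, y) 0 * (qNA μ kf x y (y kf) *
                ∏ i ∈ Finset.univ.filter (fun i : Fin (n+1) => (i:ℕ) < k),
                  qNA μ i x y (y i)) = qNA μ kf x y (y kf) * (Gm μ (x, y) 0 *
                ∏ i ∈ Finset.univ.filter (fun i : Fin (n+1) => (i:ℕ) < k),
                  qNA μ i x y (y i)) by ring, h3, mul_zero]
      have hfinal := hclaim (n+1) le_rfl
      rw [Gm_top, hG0] at hfinal
      have huniv : Finset.univ.filter (fun i : Fin (n+1) => (i:ℕ) < n+1)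
          = Finset.univ := Finset.filter_true_of_mem fun i _ => i.isLt
      rw [huniv] at hfinal
      exact hfinal.symm

lemma sum_mu_one (PX : (Fin (n+1) → Xa) → ℝ) (hPX1 : ∑ x, PX x = 1)
    (K : (Fin (n+1) → Xa) → (Fin (n+1) → Ya) → ℝ) (hK1 : ∀ x, ∑ y, K x y = 1) :
    ∑ z : (Fin (n+1) → Xa) × (Fin (n+1) → Ya), PX z.1 * K z.1 z.2 = 1 := by
  rw [Fintype.sum_prod_type]
  calc ∑ x, ∑ y, PX x * K x y = ∑ x, PX x * ∑ y, K x y :=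
        Finset.sum_congr rfl fun x _ => (Finset.mul_sum _ _ _).symm
    _ = 1 := by
        rw [Finset.sum_congr rfl fun x _ => by rw [hK1 x, mul_one]]
        exact hPX1

end Main

/-- Theorem 1 of the paper: the Gorbunov–Pinsker nonanticipatory ε-entropy
equals the nonanticipative information RDF, `R^ε_{0,n}(D) = R^{na}_{0,n}(D)`:
the infimum of `(1/(n+1)) I(X^n;Y^n)` over conditional distributions in the fidelity set
satisfying the Markov chains `X_{i+1}^n ↔ X^i ↔ Y^i` equals the infimum of
`(1/(n+1)) I(X^n → Y^n)` over causally factorized conditional distributions in the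
fidelity set. -/
theorem epsilon_entropy_eq_nonanticipative_RDF {n : ℕ} {Xa Ya : Type}
    [Fintype Xa] [Fintype Ya]
    (PX : (Fin (n+1) → Xa) → ℝ) (hPX0 : ∀ x, 0 ≤ PX x) (hPX1 : ∑ x, PX x = 1)
    (d : (Fin (n+1) → Xa) → (Fin (n+1) → Ya) → ℝ) (hd : ∀ x y, 0 ≤ d x y)
    (D : ℝ) (hD : 0 ≤ D) (A B : Set ℝ)
    (hA : A = {r | ∃ K : (Fin (n+1) → Xa) → (Fin (n+1) → Ya) → ℝ,
        (∀ x y, 0 ≤ K x y) ∧ (∀ x, ∑ y, K x y = 1) ∧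
        (∀ i : ℕ, ∀ hi : i < n,
          MC (fun z : (Fin (n+1) → Xa) × (Fin (n+1) → Ya) => PX z.1 * K z.1 z.2)
            (fun z => (fun j : {j : Fin (n+1) // i < (j : ℕ)} => z.1 j.1))
            (fun z => (fun j : {j : Fin (n+1) // (j : ℕ) ≤ i} => z.1 j.1))
            (fun z => (fun j : {j : Fin (n+1) // (j : ℕ) ≤ i} => z.2 j.1))) ∧
        (∑ x, ∑ y, PX x * K x y * d x y) / (n+1) ≤ D ∧
        r = MI (fun z : (Fin (n+1) → Xa) × (Fin (n+1) → Ya) => PX z.1 * K z.1 z.2) / (n+1)})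
    (hB : B = {r | ∃ K : (Fin (n+1) → Xa) → (Fin (n+1) → Ya) → ℝ,
        (∀ x y, 0 ≤ K x y) ∧ (∀ x, ∑ y, K x y = 1) ∧ NA K ∧
        (∑ x, ∑ y, PX x * K x y * d x y) / (n+1) ≤ D ∧
        r = DI (fun z : (Fin (n+1) → Xa) × (Fin (n+1) → Ya) => PX z.1 * K z.1 z.2)
            (fun z => z.1) (fun z => z.2) / (n+1)}) :
    sInf A = sInf B := by
  classical
  rcases isEmpty_or_nonempty Ya with hYa | hYa
  · have hXne : Nonempty (Fin (n+1) → Xa) := by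
      by_contra h
      rw [not_nonempty_iff] at h
      rw [Finset.univ_eq_empty, Finset.sum_empty] at hPX1
      exact one_ne_zero hPX1.symm
    have hYe : IsEmpty (Fin (n+1) → Ya) := ⟨fun f => hYa.false (f 0)⟩
    have hAempty : A = ∅ := by
      rw [hA]
      ext r
      simp only [Set.mem_setOf_eq, Set.mem_empty_iff_false, iff_false, not_exists]
      rintro K ⟨h0, h1, _⟩
      obtain ⟨x⟩ := hXne
      have := h1 x
      rw [Finset.univ_eq_empty, Finset.sum_empty] at this
      exact one_ne_zero this.symm
    have hBempty : B = ∅ := by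
      rw [hB]
      ext r
      simp only [Set.mem_setOf_eq, Set.mem_empty_iff_false, iff_false, not_exists]
      rintro K ⟨h0, h1, _⟩
      obtain ⟨x⟩ := hXne
      have := h1 x
      rw [Finset.univ_eq_empty, Finset.sum_empty] at this
      exact one_ne_zero this.symm
    rw [hAempty, hBempty]
  · have hAB : A = B := by
      rw [hA, hB]
      ext r
      simp only [Set.mem_setOf_eq]
      constructor
      · rintro ⟨K, hK0, hK1, hMC, hdist, hr⟩
        obtain ⟨K', hK'0, hK'1, hNA', hEq⟩ := exists_NA_kernel PX hPX0 K hK0 hK1 hMC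
        have hμ0 : ∀ z : (Fin (n+1) → Xa) × (Fin (n+1) → Ya),
            0 ≤ PX z.1 * K z.1 z.2 := fun z => mul_nonneg (hPX0 _) (hK0 _ _)
        have hμ1 : ∑ z : (Fin (n+1) → Xa) × (Fin (n+1) → Ya),
            PX z.1 * K z.1 z.2 = 1 := sum_mu_one PX hPX1 K hK1
        have hμeq : (fun z : (Fin (n+1) → Xa) × (Fin (n+1) → Ya) =>
            PX z.1 * K' z.1 z.2) = (fun z => PX z.1 * K z.1 z.2) :=
          funext fun z => hEq z.1 z.2
        obtain ⟨q', a1, a2, a3, a4⟩ := hNA'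
        have hNAK' : NA K' := by
          refine ⟨q', a1, a2, fun i x x' y y' hx hy => ?_, a4⟩
          exact a3 i x x' y y' hx hy
        refine ⟨K', hK'0, hK'1, hNAK', ?_, ?_⟩
        · calc (∑ x, ∑ y, PX x * K' x y * d x y) / (n+1)
              = (∑ x, ∑ y, PX x * K x y * d x y) / (n+1) := by
                congr 1
                refine Finset.sum_congr rfl fun x _ => Finset.sum_congr rfl fun y _ => ?_
                rw [hEq x y]
            _ ≤ D := hdist
        · rw [hr, hμeq]
          congr 1
          exact MI_eq_DI _ hμ0 hμ1
            (hR_of_MC _ hμ0 hMC)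
      · rintro ⟨K, hK0, hK1, ⟨q, hq0, hq1, hqc0, hqK⟩, hdist, hr⟩
        have hqc : ∀ (i : Fin (n+1)) x x' y y',
            (∀ j : Fin (n+1), (j : ℕ) ≤ (i : ℕ) → x j = x' j) →
            (∀ j : Fin (n+1), (j : ℕ) < (i : ℕ) → y j = y' j) → q i x y = q i x' y' := by
          intro i x x' y y' hx hy
          exact hqc0 i x x' y y' hx hy
        have hμ0 : ∀ z : (Fin (n+1) → Xa) × (Fin (n+1) → Ya),
            0 ≤ PX z.1 * K z.1 z.2 := fun z => mul_nonneg (hPX0 _) (hK0 _ _)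
        have hμ1 : ∑ z : (Fin (n+1) → Xa) × (Fin (n+1) → Ya),
            PX z.1 * K z.1 z.2 = 1 := sum_mu_one PX hPX1 K hK1
        refine ⟨K, hK0, hK1, fun i hi => MC_of_NA PX K q hq1 hqc hqK i hi, hdist, ?_⟩
        rw [hr]
        congr 1
        exact (MI_eq_DI _ hμ0 hμ1
          (fun i hi z _ => hR_of_NA PX K q hq1 hqc hqK i hi z)).symm
    rw [hAB]
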